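/- Suppose G acts on a uniform space X discretely, i.e., the action is equicontinuous and uniformly properly discontinuous. Then the projection p: X → X/G is a uniform covering map. -/

import Mathlib

/-!
Lifting a chain of `X/G` one step at a time only needs that a point `F`-close to some point of
an orbit is `E`-close to the orbit itself; for an equicontinuous action this holds by moving the
pair back with the inverse group element (equicontinuous actions are neutral). Two lifts of the
same chain with a common origin agree step by step: two images of one `F`-step from the same
point lie in the same orbit and are `F ○ F`-close, so by uniform proper discontinuity they
coincide.
-/

open scoped Uniformity

/-- An `E`-chain: consecutive members of the list are `E`-related. -/
def ChainIn {α : Type*} (E : Set (α × α)) (c : List α) : Prop :=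
  c.Chain' fun a b => (a, b) ∈ E

/-- The image `f(E)` of a relation under a map. -/
def imgRel {α β : Type*} (f : α → β) (E : Set (α × α)) : Set (β × β) :=
  Prod.map f f '' E

/-- The orbit projection `p : X → X/G`. -/
def proj (G X : Type*) [Group G] [MulAction G X] :
    X → Quotient (MulAction.orbitRel G X) :=
  Quotient.mk (MulAction.orbitRel G X)

/-- `G_F`: the subgroup of `G` generated by `S_F = {h | (x, h • x) ∈ F for some x}`. -/
def GF (G : Type*) {X : Type*} [Group G] [MulAction G X] (F : Set (X × X)) : Subgroup G :=
  Subgroup.closure {h : G | ∃ x : X, (x, h • x) ∈ F}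

/-- Chain lifting property for `f : X → Y`: for every (symmetric) entourage `E` of `X`
there is an entourage `F` such that every `f(F)`-chain starting at `f x₀` lifts to an
`E`-chain starting at `x₀`. -/
def HasChainLifting {X Y : Type*} [UniformSpace X] (f : X → Y) : Prop :=
  ∀ E ∈ 𝓤 X, SetRel.IsSymm E → ∃ F ∈ 𝓤 X, SetRel.IsSymm F ∧
    ∀ (x₀ : X) (d : List Y), ChainIn (imgRel f F) d → d.head? = some (f x₀) →
      ∃ c : List X, ChainIn E c ∧ c.head? = some x₀ ∧ c.map f = d

/-- Uniqueness of chain lifts: there is an entourage `F` such that two `F`-chains with the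
same origin and the same image are equal. -/
def HasUniqueChainLifts {X Y : Type*} [UniformSpace X] (f : X → Y) : Prop :=
  ∃ F ∈ 𝓤 X, SetRel.IsSymm F ∧
    ∀ α β : List X, ChainIn F α → ChainIn F β →
      α.head? = β.head? → α.map f = β.map f → α = β

/-- Approximate uniqueness of chain lifts: for every entourage `E` there is an entourage `F`
such that two `F`-chains with the same origin and the same image are `E`-close. -/
def HasApproxUniqueChainLifts {X Y : Type*} [UniformSpace X] (f : X → Y) : Prop :=
  ∀ E ∈ 𝓤 X, SetRel.IsSymm E → ∃ F ∈ 𝓤 X, SetRel.IsSymm F ∧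
    ∀ α β : List X, ChainIn F α → ChainIn F β →
      α.head? = β.head? → α.map f = β.map f →
        List.Forall₂ (fun a b => (a, b) ∈ E) α β

/-- Neutral action. -/
def Neutral (G X : Type*) [Group G] [MulAction G X] [UniformSpace X] : Prop :=
  ∀ E ∈ 𝓤 X, SetRel.IsSymm E → ∃ F ∈ 𝓤 X, SetRel.IsSymm F ∧
    ∀ (x y : X) (h : G), (x, h • y) ∈ F → ∃ g : G, (g • x, y) ∈ E

/-- Uniformly properly discontinuous action. -/
def UnifProperlyDiscontinuous (G X : Type*) [Group G] [MulAction G X] [UniformSpace X] : Prop :=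
  ∃ E ∈ 𝓤 X, SetRel.IsSymm E ∧ ∀ (x : X) (g : G), (x, g • x) ∈ E → g = 1

/-- Equicontinuous action. -/
def EquicontinuousAction (G X : Type*) [Group G] [MulAction G X] [UniformSpace X] : Prop :=
  ∀ E ∈ 𝓤 X, ∃ F ∈ 𝓤 X, ∀ (g : G) (x y : X), (x, y) ∈ F → (g • x, g • y) ∈ E

/-- Small scale uniformly continuous action. -/
def SSUnifCont (G X : Type*) [Group G] [MulAction G X] [UniformSpace X] : Prop :=
  ∀ E ∈ 𝓤 X, SetRel.IsSymm E → ∃ F ∈ 𝓤 X, SetRel.IsSymm F ∧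
    ∀ g ∈ GF G F, {q : X × X | (g • q.1, g • q.2) ∈ E} ∈ 𝓤 X

/-- Small scale uniformly equicontinuous action. -/
def SSUnifEquicont (G X : Type*) [Group G] [MulAction G X] [UniformSpace X] : Prop :=
  ∀ E ∈ 𝓤 X, SetRel.IsSymm E → ∃ F ∈ 𝓤 X, SetRel.IsSymm F ∧
    ∀ g ∈ GF G F, ∀ x y : X, (x, y) ∈ F → (g • x, g • y) ∈ E

/-- Small scale bounded orbits: the orbits of `G_F` are `E`-bounded. -/
def SSBoundedOrbits (G X : Type*) [Group G] [MulAction G X] [UniformSpace X] : Prop :=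
  ∀ E ∈ 𝓤 X, SetRel.IsSymm E → ∃ F ∈ 𝓤 X, SetRel.IsSymm F ∧
    ∀ x : X, ∀ g ∈ GF G F, ∀ g' ∈ GF G F, (g • x, g' • x) ∈ E

/-- Chain connected uniform space. -/
def ChainConnectedU (X : Type*) [UniformSpace X] : Prop :=
  ∀ E ∈ 𝓤 X, SetRel.IsSymm E → ∀ x y : X,
    ∃ c : List X, ChainIn E c ∧ c.head? = some x ∧ c.getLast? = some y

section Chains

variable {α β : Type*} {E F : Set (α × α)} {f : α → β}

lemma ChainIn.exists_lift_cons
    (hstep : ∀ x a b, (a, b) ∈ F → f a = f x → ∃ y, (x, y) ∈ E ∧ f y = f b)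
    (x₀ : α) (d : List β) (hd : ChainIn (imgRel f F) (f x₀ :: d)) :
    ∃ c : List α, ChainIn E (x₀ :: c) ∧ c.map f = d := by
  induction d generalizing x₀ with
  | nil => exact ⟨[], List.isChain_singleton x₀, rfl⟩
  | cons z d ih =>
    obtain ⟨⟨⟨a, b⟩, hab, hpair⟩, hd⟩ := List.isChain_cons_cons.1 hd
    obtain ⟨hfa, hfb⟩ := Prod.ext_iff.1 hpair
    obtain ⟨x₁, hx₀x₁, hfx₁⟩ := hstep x₀ a b hab hfa
    have hz : f x₁ = z := hfx₁.trans hfb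
    obtain ⟨c, hc, hcd⟩ := ih x₁ (hz ▸ hd)
    exact ⟨x₁ :: c, List.isChain_cons_cons.2 ⟨hx₀x₁, hc⟩, by simp [hz, hcd]⟩

lemma ChainIn.exists_lift
    (hstep : ∀ x a b, (a, b) ∈ F → f a = f x → ∃ y, (x, y) ∈ E ∧ f y = f b)
    (x₀ : α) (d : List β) (hd : ChainIn (imgRel f F) d) (hhead : d.head? = some (f x₀)) :
    ∃ c : List α, ChainIn E c ∧ c.head? = some x₀ ∧ c.map f = d := by
  match d, hhead with
  | _ :: d, hhead =>
    obtain rfl : _ = f x₀ := by simpa using hhead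
    obtain ⟨c, hc, rfl⟩ := ChainIn.exists_lift_cons hstep x₀ d hd
    exact ⟨x₀ :: c, hc, rfl, rfl⟩

lemma ChainIn.eq_of_cons_of_map_eq
    (hstep : ∀ a b c, (a, b) ∈ F → (a, c) ∈ F → f b = f c → b = c) :
    ∀ (a : α) (l l' : List α), ChainIn F (a :: l) → ChainIn F (a :: l') →
      l.map f = l'.map f → l = l'
  | _, [], [], _, _, _ => rfl
  | _, [], _ :: _, _, _, h | _, _ :: _, [], _, _, h => by simp at h
  | a, b :: l, b' :: l', hl, hl', hmap => by
    obtain ⟨hab, hl⟩ := List.isChain_cons_cons.1 hl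
    obtain ⟨hab', hl'⟩ := List.isChain_cons_cons.1 hl'
    obtain ⟨hfb, htail⟩ := List.cons_eq_cons.1 hmap
    obtain rfl := hstep a b b' hab hab' hfb
    rw [ChainIn.eq_of_cons_of_map_eq hstep b l l' hl hl' htail]

lemma ChainIn.eq_of_map_eq
    (hstep : ∀ a b c, (a, b) ∈ F → (a, c) ∈ F → f b = f c → b = c)
    {l l' : List α} (hl : ChainIn F l) (hl' : ChainIn F l')
    (hhead : l.head? = l'.head?) (hmap : l.map f = l'.map f) : l = l' := by
  match l, l', hhead with
  | [], [], _ => rfl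
  | a :: l, a' :: l', hhead =>
    obtain rfl : a = a' := by simpa using hhead
    rw [ChainIn.eq_of_cons_of_map_eq hstep a l l' hl hl' (List.cons_eq_cons.1 hmap).2]

end Chains

section OrbitProjection

variable {G X : Type*} [Group G] [MulAction G X]

lemma proj_eq_iff {a b : X} : proj G X a = proj G X b ↔ ∃ g : G, g • b = a := by
  rw [proj, Quotient.eq]
  exact (MulAction.orbitRel_apply (G := G)).trans MulAction.mem_orbit_iff

lemma proj_smul (g : G) (x : X) : proj G X (g • x) = proj G X x :=
  proj_eq_iff.2 ⟨g, rfl⟩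

variable [UniformSpace X]

lemma EquicontinuousAction.neutral (hequi : EquicontinuousAction G X) : Neutral G X := by
  intro E hE _
  obtain ⟨F, hF, hFE⟩ := hequi E hE
  refine ⟨SetRel.symmetrize F, symmetrize_mem_uniformity hF, inferInstance, ?_⟩
  intro x y h hxy
  refine ⟨h⁻¹, ?_⟩
  simpa using hFE h⁻¹ x (h • y) hxy.1

lemma Neutral.hasChainLifting (hneutral : Neutral G X) : HasChainLifting (proj G X) := by
  intro E hE hEs
  obtain ⟨F, hF, hFs, hFE⟩ := hneutral E hE hEs
  refine ⟨F, hF, hFs, ChainIn.exists_lift fun x₀ a b hab hax₀ => ?_⟩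
  obtain ⟨h, rfl⟩ := proj_eq_iff.1 hax₀
  obtain ⟨g, hgb⟩ := hFE b x₀ h (SetRel.symm F hab)
  exact ⟨g • b, SetRel.symm E hgb, proj_smul g b⟩

lemma UnifProperlyDiscontinuous.hasUniqueChainLifts (hupd : UnifProperlyDiscontinuous G X) :
    HasUniqueChainLifts (proj G X) := by
  obtain ⟨E₀, hE₀, -, hE₀G⟩ := hupd
  obtain ⟨W, hW, hWE₀⟩ := comp_mem_uniformity_sets hE₀
  refine ⟨SetRel.symmetrize W, symmetrize_mem_uniformity hW, inferInstance,
    fun l l' hl hl' => ChainIn.eq_of_map_eq (fun a b c hab hac hbc => ?_) hl hl'⟩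
  obtain ⟨g, rfl⟩ := proj_eq_iff.1 hbc
  rw [hE₀G c g (hWE₀ ⟨a, hac.2, hab.1⟩), one_smul]

end OrbitProjection

/-- A discrete action (equicontinuous and uniformly properly discontinuous) induces a
uniform covering map `X → X/G`. -/
theorem stmt16 (G X : Type*) [Group G] [MulAction G X] [UniformSpace X]
    (hequi : EquicontinuousAction G X) (hupd : UnifProperlyDiscontinuous G X) :
    HasChainLifting (proj G X) ∧ HasUniqueChainLifts (proj G X) :=
  ⟨hequi.neutral.hasChainLifting, hupd.hasUniqueChainLifts⟩
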